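/- arXiv:1310.3363 — 3 statements merged into one kernel-verified Lean document; each statement's English description precedes it below -/
import Mathlib

section
/- Let (Ω, F, P) be a probability space and E a locally compact Polish space. Define the projection capacity I_Ω(A) := P*(π_Ω(A)) for all A ⊆ Ω × E, where P* is the outer measure of P. Then: (1) I_Ω is an (F ⊗_p K)-capacity, where F ⊗_p K is the paving of finite unions of rectangles B × K with B ∈ F and K ⊆ E compact; (2) for every A in the product σ-field F ⊗ B(E), there exists an increasing sequence (L_n) of countable intersections of elements of F ⊗_p K such that for every n: L_n ⊆ A, π_Ω(L_n) ∈ F, and P(π_Ω(L_n)) ≤ P*(π_Ω(A)) ≤ P(π_Ω(L_n)) + 1/n. -/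
open MeasureTheory Set
open scoped ENNReal

/-!
`A ↦ P (π_Ω A)` is continuous along increasing sequences of arbitrary sets because `P` is, and
along decreasing sequences of finite unions of rectangles `B ×ˢ K` because their sections are
compact, so that the projection commutes with the intersection.

For the approximation, restrict to a strip `Ω × K₀` with `K₀` compact, where the paving has a
largest element. The sets `A` for which `A` and `Aᶜ` are both Suslin over the paving (inside the
strip) form a σ-algebra containing the rectangles with closed side, hence every product-measurable
set is Suslin there, and Choquet's capacitability theorem approximates it from inside by countable
intersections of paving sets. Exhausting `E` by compacts and taking finite unions of the
approximations gives the increasing sequence.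
-/

theorem ENNReal.exists_le_add_of_le_iSup {f : ℕ → ℝ≥0∞} {v ε : ℝ≥0∞} (hv : v ≠ ∞)
    (h : v ≤ ⨆ n, f n) (hε : ε ≠ 0) : ∃ n, v ≤ f n + ε := by
  rcases eq_or_ne v 0 with rfl | hv0
  · exact ⟨0, zero_le⟩
  obtain ⟨n, hn⟩ := lt_iSup_iff.1 ((ENNReal.sub_lt_self hv hv0 hε).trans_le h)
  exact ⟨n, tsub_le_iff_right.1 hn.le⟩

theorem le_add_sum_of_le_succ_add {α : Type*} [AddCommMonoid α] [PartialOrder α]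
    [IsOrderedAddMonoid α] {u δ : ℕ → α} (h : ∀ n, u n ≤ u (n + 1) + δ n) (n : ℕ) :
    u 0 ≤ u n + ∑ k ∈ Finset.range n, δ k := by
  induction n with
  | zero => simp
  | succ n ih =>
    calc u 0 ≤ u n + ∑ k ∈ Finset.range n, δ k := ih
      _ ≤ u (n + 1) + δ n + ∑ k ∈ Finset.range n, δ k := by gcongr; exact h n
      _ = u (n + 1) + ∑ k ∈ Finset.range (n + 1), δ k := by
        rw [Finset.sum_range_succ, add_assoc, add_comm (δ n)]

section Capacity

variable {X : Type*} {J J' : Set (Set X)} {I : Set X → ℝ≥0∞}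

def deltaPaving (J : Set (Set X)) : Set (Set X) :=
  {S | ∃ f : ℕ → Set X, (∀ n, f n ∈ J) ∧ S = ⋂ n, f n}

structure IsCapacity (J : Set (Set X)) (I : Set X → ℝ≥0∞) : Prop where
  mono : Monotone I
  iUnion_eq_iSup : ∀ A : ℕ → Set X, Monotone A → I (⋃ n, A n) = ⨆ n, I (A n)
  iInter_eq_iInf : ∀ A : ℕ → Set X, (∀ n, A n ∈ J) → Antitone A → I (⋂ n, A n) = ⨅ n, I (A n)

def IsCapacitable (J : Set (Set X)) (I : Set X → ℝ≥0∞) (A : Set X) : Prop :=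
  ∀ ε ≠ 0, ∃ L ∈ deltaPaving J, L ⊆ A ∧ I A ≤ I L + ε

theorem deltaPaving_mono (h : J ⊆ J') : deltaPaving J ⊆ deltaPaving J' := by
  rintro S ⟨f, hf, rfl⟩
  exact ⟨f, fun n => h (hf n), rfl⟩

theorem union_mem_deltaPaving (hJ : ∀ S ∈ J, ∀ T ∈ J, S ∪ T ∈ J) {S T : Set X}
    (hS : S ∈ deltaPaving J) (hT : T ∈ deltaPaving J) : S ∪ T ∈ deltaPaving J := by
  obtain ⟨f, hf, rfl⟩ := hS
  obtain ⟨g, hg, rfl⟩ := hT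
  refine ⟨fun k => f (Nat.unpair k).1 ∪ g (Nat.unpair k).2, fun k => hJ _ (hf _) _ (hg _), ?_⟩
  rw [iInter_union_iInter]
  ext x
  simp only [mem_iInter]
  exact ⟨fun h k => h _ _, fun h i j => by simpa using h (Nat.pair i j)⟩

theorem exists_antitone_of_mem_deltaPaving (hJ : ∀ S ∈ J, ∀ T ∈ J, S ∩ T ∈ J) {S : Set X}
    (hS : S ∈ deltaPaving J) : ∃ g : ℕ → Set X, (∀ n, g n ∈ J) ∧ Antitone g ∧ S = ⋂ n, g n := by
  obtain ⟨f, hf, rfl⟩ := hS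
  refine ⟨dissipate f, fun n => ?_, antitone_dissipate, iInter_dissipate.symm⟩
  induction n with
  | zero => simpa [dissipate_zero_nat] using hf 0
  | succ n ih => rw [dissipate_succ]; exact hJ _ ih _ (hf _)

theorem biUnion_mem_of_finite (hJ₀ : ∅ ∈ J) (hJ : ∀ S ∈ J, ∀ T ∈ J, S ∪ T ∈ J) {ι : Type*}
    {T : Set ι} (hT : T.Finite) {f : ι → Set X} (hf : ∀ i ∈ T, f i ∈ J) : ⋃ i ∈ T, f i ∈ J := by
  induction T, hT using Set.Finite.induction_on with
  | empty => simpa using hJ₀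
  | insert _ _ ih =>
    rw [biUnion_insert]
    exact hJ _ (hf _ (mem_insert _ _)) _ (ih fun i hi => hf i (mem_insert_of_mem _ hi))

theorem IsCapacity.of_paving_subset (hI : IsCapacity J' I) (h : J ⊆ J') : IsCapacity J I :=
  ⟨hI.mono, hI.iUnion_eq_iSup, fun A hA => hI.iInter_eq_iInf A fun n => h (hA n)⟩

theorem IsCapacitable.mono_paving {A : Set X} (hA : IsCapacitable J I A) (h : J ⊆ J') :
    IsCapacitable J' I A := fun ε hε =>
  let ⟨L, hL, hLA, hLI⟩ := hA ε hε
  ⟨L, deltaPaving_mono h hL, hLA, hLI⟩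

theorem IsCapacity.isCapacitable_iUnion (hI : IsCapacity J I) (hfin : ∀ A, I A ≠ ∞)
    {A : ℕ → Set X} (hA : Monotone A) (h : ∀ n, IsCapacitable J I (A n)) :
    IsCapacitable J I (⋃ n, A n) := by
  intro ε hε
  have hε2 : ε / 2 ≠ 0 := (ENNReal.half_pos hε).ne'
  obtain ⟨m, hm⟩ := ENNReal.exists_le_add_of_le_iSup (hfin _) (hI.iUnion_eq_iSup A hA).le hε2
  obtain ⟨L, hL, hLA, hLI⟩ := h m _ hε2
  refine ⟨L, hL, hLA.trans (subset_iUnion A m), ?_⟩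
  calc I (⋃ n, A n) ≤ I L + ε / 2 + ε / 2 := hm.trans (by gcongr)
    _ = I L + ε := by rw [add_assoc, ENNReal.add_halves]

theorem IsCapacitable.exists_monotone (hI : Monotone I) (hJ : ∀ S ∈ J, ∀ T ∈ J, S ∪ T ∈ J)
    {A : Set X} (hA : IsCapacitable J I A) :
    ∃ L : ℕ → Set X, Monotone L ∧ ∀ n : ℕ,
      L n ∈ deltaPaving J ∧ L n ⊆ A ∧ I A ≤ I (L n) + ((n : ℝ≥0∞) + 1)⁻¹ := by
  choose L hLJ hLA hLI using fun n : ℕ =>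
    hA ((n : ℝ≥0∞) + 1)⁻¹ (ENNReal.inv_ne_zero.2 (ENNReal.add_ne_top.2 ⟨by simp, by simp⟩))
  refine ⟨accumulate L, monotone_accumulate, fun n => ⟨?_, ?_, ?_⟩⟩
  · induction n with
    | zero => simpa [accumulate_zero_nat] using hLJ 0
    | succ n ih => rw [accumulate_succ]; exact union_mem_deltaPaving hJ ih (hLJ _)
  · exact iUnion₂_subset fun k _ => hLA k
  · exact (hLI n).trans (by gcongr; exact hI (subset_accumulate (x := n)))

end Capacity

section Suslin

variable {X : Type*} {J : Set (Set X)}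

/-- The first `n` entries of `σ`, newest first, so that extending a prefix is `List.cons`. -/
def seqPrefix (σ : ℕ → ℕ) : ℕ → List ℕ
  | 0 => []
  | n + 1 => σ n :: seqPrefix σ n

@[simp] theorem seqPrefix_zero (σ : ℕ → ℕ) : seqPrefix σ 0 = [] := rfl

@[simp] theorem seqPrefix_succ (σ : ℕ → ℕ) (n : ℕ) :
    seqPrefix σ (n + 1) = σ n :: seqPrefix σ n := rfl

@[simp] theorem length_seqPrefix (σ : ℕ → ℕ) (n : ℕ) : (seqPrefix σ n).length = n := by
  induction n with
  | zero => rfl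
  | succ n ih => simp [ih]

theorem seqPrefix_congr {σ τ : ℕ → ℕ} {n : ℕ} (h : ∀ i < n, σ i = τ i) :
    seqPrefix σ n = seqPrefix τ n := by
  induction n with
  | zero => rfl
  | succ n ih => rw [seqPrefix_succ, seqPrefix_succ, h n n.lt_succ_self,
      ih fun i hi => h i (by omega)]

theorem drop_seqPrefix (σ : ℕ → ℕ) (n d : ℕ) : (seqPrefix σ (n + d)).drop d = seqPrefix σ n := by
  induction d with
  | zero => rfl
  | succ d ih => rw [← Nat.add_assoc, seqPrefix_succ, List.drop_succ_cons, ih]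

theorem seqPrefix_succ_eq_append (σ : ℕ → ℕ) (n : ℕ) :
    seqPrefix σ (n + 1) = seqPrefix (fun i => σ (i + 1)) n ++ [σ 0] := by
  induction n with
  | zero => rfl
  | succ n ih => rw [seqPrefix_succ, ih]; rfl

def seqOfPrefix (s : List ℕ) (i : ℕ) : ℕ := s.reverse.getD i 0

theorem seqOfPrefix_seqPrefix {σ : ℕ → ℕ} {n i : ℕ} (h : i < n) :
    seqOfPrefix (seqPrefix σ n) i = σ i := by
  induction n with
  | zero => omega
  | succ n ih =>
    rw [seqOfPrefix, seqPrefix_succ, List.reverse_cons]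
    rcases Nat.lt_succ_iff_lt_or_eq.1 h with h | rfl
    · rw [List.getD_append _ _ _ _ (by simpa using h)]
      exact ih h
    · rw [List.getD_append_right _ _ _ _ (by simp)]
      simp

def suslin (C : List ℕ → Set X) : Set X := ⋃ σ : ℕ → ℕ, ⋂ n, C (seqPrefix σ n)

def IsSuslin (J : Set (Set X)) (A : Set X) : Prop :=
  ∃ C : List ℕ → Set X, (∀ s, C s ∈ J) ∧ (∀ k s, C (k :: s) ⊆ C s) ∧ A = suslin C

theorem subset_apply_drop {C : List ℕ → Set X} (hC : ∀ k s, C (k :: s) ⊆ C s) (s : List ℕ)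
    (n : ℕ) : C s ⊆ C (s.drop n) := by
  induction s generalizing n with
  | nil => simp
  | cons a s ih =>
    cases n with
    | zero => rfl
    | succ n => exact (hC a s).trans (ih n)

theorem IsSuslin.of_mem {S : Set X} (hS : S ∈ J) : IsSuslin J S :=
  ⟨fun _ => S, fun _ => hS, fun _ _ => subset_rfl,
    by simp only [suslin, iInter_const, iUnion_const]⟩

variable {T : Set X}

theorem IsSuslin.iUnion (hT : T ∈ J) (hJT : ∀ S ∈ J, S ⊆ T) {A : ℕ → Set X}
    (hA : ∀ k, IsSuslin J (A k)) : IsSuslin J (⋃ k, A k) := by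
  classical
  choose C hCJ hCreg hCA using hA
  -- the first entry of the index sequence, i.e. the last entry of the list, selects `k`
  set D : List ℕ → Set X := fun s => if h : s = [] then T else C (s.getLast h) s.dropLast
  have hD : ∀ t k, D (t ++ [k]) = C k t := fun t k => by simp [D]
  refine ⟨D, fun s => ?_, fun k s => ?_, ?_⟩
  · rcases s.eq_nil_or_concat' with rfl | ⟨t, k, rfl⟩
    · simpa [D] using hT
    · rw [hD]; exact hCJ k t
  · rcases s.eq_nil_or_concat' with rfl | ⟨t, j, rfl⟩
    · simpa [D] using hJT _ (hCJ k [])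
    · rw [← List.cons_append, hD, hD]; exact hCreg j k t
  ext x
  simp only [mem_iUnion, hCA, suslin, mem_iInter]
  constructor
  · rintro ⟨k, τ, hτ⟩
    refine ⟨fun i => if i = 0 then k else τ (i - 1), fun n => ?_⟩
    cases n with
    | zero => simpa [D] using hJT _ (hCJ k []) (hτ 0)
    | succ n => rw [seqPrefix_succ_eq_append, hD]; simpa using hτ n
  · rintro ⟨σ, hσ⟩
    refine ⟨σ 0, fun i => σ (i + 1), fun n => ?_⟩
    rw [← hD, ← seqPrefix_succ_eq_append]
    exact hσ (n + 1)

theorem IsSuslin.union (hT : T ∈ J) (hJT : ∀ S ∈ J, S ⊆ T) {A B : Set X}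
    (hA : IsSuslin J A) (hB : IsSuslin J B) : IsSuslin J (A ∪ B) := by
  have : A ∪ B = ⋃ k : ℕ, if k = 0 then A else B := by
    ext x
    simp only [mem_union, mem_iUnion]
    refine ⟨fun h => h.elim (fun h => ⟨0, by simpa⟩) (fun h => ⟨1, by simpa⟩), ?_⟩
    rintro ⟨k, hk⟩
    split_ifs at hk
    exacts [Or.inl hk, Or.inr hk]
  rw [this]
  exact IsSuslin.iUnion hT hJT fun k => by split_ifs <;> assumption

/-- Interleaving scheme: position `j = pair k i` of the index sequence carries the `i`-th
entry of the index sequence for the `k`-th scheme. -/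
def interleaveScheme (T : Set X) (C : ℕ → List ℕ → Set X) : List ℕ → Set X
  | [] => T
  | a :: s => interleaveScheme T C s ∩ C (Nat.unpair s.length).1
      (seqPrefix (fun m => seqOfPrefix (a :: s) (Nat.pair (Nat.unpair s.length).1 m))
        ((Nat.unpair s.length).2 + 1))

theorem mem_interleaveScheme_seqPrefix {C : ℕ → List ℕ → Set X} {σ : ℕ → ℕ} {n : ℕ} {x : X} :
    x ∈ interleaveScheme T C (seqPrefix σ n) ↔ x ∈ T ∧ ∀ j < n,
      x ∈ C (Nat.unpair j).1
        (seqPrefix (fun m => σ (Nat.pair (Nat.unpair j).1 m)) ((Nat.unpair j).2 + 1)) := by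
  induction n with
  | zero => simp [interleaveScheme]
  | succ n ih =>
    have hpre : seqPrefix (fun m => seqOfPrefix (seqPrefix σ (n + 1))
          (Nat.pair (Nat.unpair n).1 m)) ((Nat.unpair n).2 + 1)
        = seqPrefix (fun m => σ (Nat.pair (Nat.unpair n).1 m)) ((Nat.unpair n).2 + 1) := by
      refine seqPrefix_congr fun m hm => seqOfPrefix_seqPrefix ?_
      calc Nat.pair (Nat.unpair n).1 m ≤ Nat.pair (Nat.unpair n).1 (Nat.unpair n).2 :=
            (StrictMono.monotone fun _ _ => Nat.pair_lt_pair_right _) (by omega)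
        _ < n + 1 := by rw [Nat.pair_unpair]; omega
    rw [seqPrefix_succ, interleaveScheme, ← seqPrefix_succ, length_seqPrefix, mem_inter_iff, ih,
      hpre, and_assoc, Nat.forall_lt_succ_right]

theorem IsSuslin.iInter (hT : T ∈ J) (hJT : ∀ S ∈ J, S ⊆ T)
    (hJ : ∀ S ∈ J, ∀ S' ∈ J, S ∩ S' ∈ J) {A : ℕ → Set X}
    (hA : ∀ k, IsSuslin J (A k)) : IsSuslin J (⋂ k, A k) := by
  choose C hCJ hCreg hCA using hA
  refine ⟨interleaveScheme T C, fun s => ?_, fun _ _ => inter_subset_left, ?_⟩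
  · induction s with
    | nil => exact hT
    | cons a s ih => exact hJ _ ih _ (hCJ _ _)
  ext x
  simp only [mem_iInter, hCA, suslin, mem_iUnion, mem_interleaveScheme_seqPrefix]
  constructor
  · intro h
    choose τ hτ using h
    refine ⟨fun j => τ (Nat.unpair j).1 (Nat.unpair j).2, fun n =>
      ⟨hJT _ (hCJ 0 []) (hτ 0 0), fun j _ => ?_⟩⟩
    simpa using hτ (Nat.unpair j).1 ((Nat.unpair j).2 + 1)
  · rintro ⟨σ, hσ⟩ k
    have hk : ∀ i, x ∈ C k (seqPrefix (fun m => σ (Nat.pair k m)) (i + 1)) := fun i => by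
      simpa using (hσ (Nat.pair k i + 1)).2 (Nat.pair k i) (Nat.lt_succ_self _)
    refine ⟨fun m => σ (Nat.pair k m), fun n => ?_⟩
    cases n with
    | zero => exact hCreg k _ _ (hk 0)
    | succ i => exact hk i

end Suslin

section Choquet

variable {X : Type*} {J : Set (Set X)} {I : Set X → ℝ≥0∞} {C : List ℕ → Set X}

def suslinBounded (C : List ℕ → Set X) (b : List ℕ) : Set X :=
  {x | ∃ σ : ℕ → ℕ, List.Forall₂ (· ≤ ·) (seqPrefix σ b.length) b ∧ ∀ n, x ∈ C (seqPrefix σ n)}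

theorem suslinBounded_nil : suslinBounded C [] = suslin C := by
  ext x
  simp [suslinBounded, suslin]

theorem suslinBounded_eq_iUnion (b : List ℕ) :
    suslinBounded C b = ⋃ M, suslinBounded C (M :: b) := by
  ext x
  simp only [suslinBounded, mem_iUnion, mem_ofPred_eq, List.length_cons, seqPrefix_succ,
    List.forall₂_cons]
  exact ⟨fun ⟨σ, hb, h⟩ => ⟨_, σ, ⟨le_rfl, hb⟩, h⟩, fun ⟨_, σ, ⟨_, hb⟩, h⟩ => ⟨σ, hb, h⟩⟩

theorem monotone_suslinBounded_cons (b : List ℕ) :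
    Monotone fun M => suslinBounded C (M :: b) := by
  rintro M M' hM x ⟨σ, hb, h⟩
  simp only [List.length_cons, seqPrefix_succ, List.forall₂_cons] at hb
  exact ⟨σ, by simpa using ⟨hb.1.trans hM, hb.2⟩, h⟩

theorem suslinBounded_subset (b : List ℕ) :
    suslinBounded C b ⊆ ⋃ s ∈ {s | List.Forall₂ (· ≤ ·) s b}, C s := by
  rintro x ⟨σ, hb, h⟩
  exact mem_biUnion hb (h _)

theorem finite_setOf_forall₂_le (b : List ℕ) :
    {s : List ℕ | List.Forall₂ (· ≤ ·) s b}.Finite := by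
  induction b with
  | nil => simp [List.forall₂_nil_right_iff]
  | cons k b ih =>
    have : {s : List ℕ | List.Forall₂ (· ≤ ·) s (k :: b)}
        = image2 List.cons (Iic k) {s | List.Forall₂ (· ≤ ·) s b} := by
      ext s
      simp only [mem_ofPred_eq, List.forall₂_cons_right_iff, mem_image2, mem_Iic]
      grind
    rw [this]
    exact (finite_Iic k).image2 _ ih

theorem exists_forall_eq_apply_seqPrefix (Φ : List ℕ → ℕ) :
    ∃ β : ℕ → ℕ, ∀ n, β n = Φ (seqPrefix β n) := by
  let g : ℕ → List ℕ := fun n => Nat.rec [] (fun _ s => Φ s :: s) n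
  have hg : ∀ n, seqPrefix (fun k => Φ (g k)) n = g n := by
    intro n
    induction n with
    | zero => rfl
    | succ n ih => rw [seqPrefix_succ, ih]
  exact ⟨fun k => Φ (g k), fun n => by rw [hg]⟩

/-- Kőnig's lemma for a regular scheme: the lists below `seqPrefix β n` whose set contains `x`
form a finitely branching tree with nodes at every level, hence with an infinite branch. -/
theorem mem_suslin_of_forall_exists_forall₂_le (hC : ∀ k s, C (k :: s) ⊆ C s) (β : ℕ → ℕ)
    {x : X} (hx : ∀ n, ∃ s, List.Forall₂ (· ≤ ·) s (seqPrefix β n) ∧ x ∈ C s) :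
    x ∈ suslin C := by
  let α : ℕ → Type := fun n => {s // List.Forall₂ (· ≤ ·) s (seqPrefix β n) ∧ x ∈ C s}
  have hfin : ∀ n, Finite (α n) := fun n =>
    ((finite_setOf_forall₂_le (seqPrefix β n)).subset fun _ hs => hs.1).to_subtype
  have hne : ∀ n, Nonempty (α n) := fun n =>
    let ⟨s, hs⟩ := hx n
    ⟨⟨s, hs⟩⟩
  let π : {i j : ℕ} → i ≤ j → α j → α i := fun {i j} hij s =>
    ⟨s.1.drop (j - i), by
      obtain ⟨d, rfl⟩ := Nat.exists_eq_add_of_le hij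
      simpa [drop_seqPrefix] using List.forall₂_drop (i + d - i) s.2.1,
      subset_apply_drop hC _ _ s.2.2⟩
  obtain ⟨f, hf⟩ := exists_seq_forall_proj_of_forall_finite π
    (fun _ _ => Subtype.ext (by simp [π]))
    (fun i j k hij hjk s => Subtype.ext (by simp only [π, List.drop_drop]; congr 1; omega))
    (fun _ _ => toFinite _)
  have hlen : ∀ n, (f n).1.length = n := fun n => by simpa using (f n).2.1.length_eq
  have hpre : ∀ n, seqPrefix (fun k => (f (k + 1)).1.headI) n = (f n).1 := by
    intro n
    induction n with
    | zero => exact (List.eq_nil_of_length_eq_zero (hlen 0)).symm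
    | succ n ih =>
      obtain ⟨a, t, ht⟩ := List.exists_cons_of_length_eq_add_one (hlen (n + 1))
      have hdrop : (f (n + 1)).1.drop 1 = (f n).1 := by
        simpa [π] using congrArg Subtype.val (hf n.le_succ)
      rw [seqPrefix_succ, ih, ← hdrop, ht]
      rfl
  exact mem_iUnion.2 ⟨_, mem_iInter.2 fun n => hpre n ▸ (f n).2.2⟩

/-- Choose bounds `β 0, β 1, …` one at a time so that bounding the `n`-th index by `β n` loses
capacity at most `δ n`, where `∑ δ < ε`. The finite unions `D n` of the scheme below the bounds
decrease, lie in `J`, and their intersection lies in the kernel by Kőnig's lemma. -/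
theorem IsCapacity.isCapacitable_of_isSuslin (hI : IsCapacity J I) (hfin : ∀ A, I A ≠ ∞)
    (hJ₀ : ∅ ∈ J) (hJ : ∀ S ∈ J, ∀ T ∈ J, S ∪ T ∈ J) {A : Set X} (hA : IsSuslin J A) :
    IsCapacitable J I A := by
  intro ε hε
  obtain ⟨C, hCJ, hCreg, rfl⟩ := hA
  obtain ⟨δ, hδ, hδε⟩ := ENNReal.exists_pos_sum_of_countable hε ℕ
  have hstep : ∀ b : List ℕ, ∃ M,
      I (suslinBounded C b) ≤ I (suslinBounded C (M :: b)) + δ b.length := fun b =>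
    ENNReal.exists_le_add_of_le_iSup (hfin _)
      (by rw [← hI.iUnion_eq_iSup _ (monotone_suslinBounded_cons b), ← suslinBounded_eq_iUnion])
      (ENNReal.coe_ne_zero.2 (hδ _).ne')
  choose Φ hΦ using hstep
  obtain ⟨β, hβ⟩ := exists_forall_eq_apply_seqPrefix Φ
  have hchain : ∀ n, I (suslin C) ≤
      I (suslinBounded C (seqPrefix β n)) + ∑ k ∈ Finset.range n, (δ k : ℝ≥0∞) :=
    suslinBounded_nil (C := C) ▸ le_add_sum_of_le_succ_add
      (u := fun n => I (suslinBounded C (seqPrefix β n))) fun n => by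
        simpa [hβ n] using hΦ (seqPrefix β n)
  let D : ℕ → Set X := fun n => ⋃ s ∈ {s | List.Forall₂ (· ≤ ·) s (seqPrefix β n)}, C s
  have hDJ : ∀ n, D n ∈ J := fun n =>
    biUnion_mem_of_finite hJ₀ hJ (finite_setOf_forall₂_le _) fun s _ => hCJ s
  have hDanti : Antitone D := by
    refine antitone_nat_of_succ_le fun n => iUnion₂_subset fun s hs => ?_
    obtain ⟨a, t, -, ht, rfl⟩ := List.forall₂_cons_right_iff.1 hs
    exact (hCreg a t).trans (subset_biUnion_of_mem (u := C) ht)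
  refine ⟨⋂ n, D n, ⟨D, hDJ, rfl⟩, fun x hx => ?_, ?_⟩
  · refine mem_suslin_of_forall_exists_forall₂_le hCreg β fun n => ?_
    simpa [D] using mem_iInter.1 hx n
  · rw [hI.iInter_eq_iInf D hDJ hDanti, ENNReal.iInf_add]
    refine le_iInf fun n => (hchain n).trans (add_le_add (hI.mono (suslinBounded_subset _)) ?_)
    exact (ENNReal.sum_le_tsum _).trans hδε.le

end Choquet

section Projection

variable {Ω E : Type*} [MeasurableSpace Ω] [TopologicalSpace E]

def compactRectPaving : Set (Set (Ω × E)) :=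
  {S | ∃ (n : ℕ) (B : Fin n → Set Ω) (K : Fin n → Set E),
    (∀ i, MeasurableSet (B i)) ∧ (∀ i, IsCompact (K i)) ∧ S = ⋃ i, B i ×ˢ K i}

theorem iUnion_prod_mem_compactRectPaving {ι : Type*} [Finite ι] {B : ι → Set Ω}
    {K : ι → Set E} (hB : ∀ i, MeasurableSet (B i)) (hK : ∀ i, IsCompact (K i)) :
    ⋃ i, B i ×ˢ K i ∈ compactRectPaving := by
  obtain ⟨n, ⟨e⟩⟩ := Finite.exists_equiv_fin ι
  exact ⟨n, B ∘ e.symm, K ∘ e.symm, fun _ => hB _, fun _ => hK _,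
    (e.symm.surjective.iUnion_comp fun i => B i ×ˢ K i).symm⟩

theorem prod_mem_compactRectPaving {B : Set Ω} {K : Set E} (hB : MeasurableSet B)
    (hK : IsCompact K) : B ×ˢ K ∈ compactRectPaving := by
  have := iUnion_prod_mem_compactRectPaving (ι := Unit) (fun _ => hB) fun _ => hK
  rwa [iUnion_const] at this

theorem empty_mem_compactRectPaving : (∅ : Set (Ω × E)) ∈ compactRectPaving := by
  simpa using prod_mem_compactRectPaving MeasurableSet.empty (isCompact_empty (X := E))

theorem union_mem_compactRectPaving {S T : Set (Ω × E)} (hS : S ∈ compactRectPaving)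
    (hT : T ∈ compactRectPaving) : S ∪ T ∈ compactRectPaving := by
  obtain ⟨m, B, K, hB, hK, rfl⟩ := hS
  obtain ⟨n, B', K', hB', hK', rfl⟩ := hT
  have := iUnion_prod_mem_compactRectPaving (B := Sum.elim B B') (K := Sum.elim K K')
    (Sum.rec hB hB') (Sum.rec hK hK')
  rwa [iUnion_sum] at this

theorem inter_mem_compactRectPaving [T2Space E] {S T : Set (Ω × E)}
    (hS : S ∈ compactRectPaving) (hT : T ∈ compactRectPaving) : S ∩ T ∈ compactRectPaving := by
  obtain ⟨m, B, K, hB, hK, rfl⟩ := hS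
  obtain ⟨n, B', K', hB', hK', rfl⟩ := hT
  have := iUnion_prod_mem_compactRectPaving (B := fun p : Fin m × Fin n => B p.1 ∩ B' p.2)
    (K := fun p => K p.1 ∩ K' p.2) (fun p => (hB _).inter (hB' _)) fun p => (hK _).inter (hK' _)
  rw [iUnion_prod'] at this
  rw [iUnion_inter_iUnion]
  simpa only [prod_inter_prod] using this

theorem isCompact_preimage_mk_of_mem_compactRectPaving {S : Set (Ω × E)}
    (hS : S ∈ compactRectPaving) (ω : Ω) : IsCompact (Prod.mk ω ⁻¹' S) := by
  classical
  obtain ⟨n, B, K, -, hK, rfl⟩ := hS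
  rw [preimage_iUnion]
  refine isCompact_iUnion fun i => ?_
  rw [mk_preimage_prod_right_eq_if]
  split_ifs
  exacts [hK i, isCompact_empty]

theorem measurableSet_fst_image_of_mem_compactRectPaving {S : Set (Ω × E)}
    (hS : S ∈ compactRectPaving) : MeasurableSet (Prod.fst '' S) := by
  obtain ⟨n, B, K, hB, -, rfl⟩ := hS
  rw [image_iUnion]
  refine MeasurableSet.iUnion fun i => ?_
  rcases (K i).eq_empty_or_nonempty with h | h
  · simp [h]
  · rw [fst_image_prod _ h]
    exact hB i

/-- Cantor's intersection theorem in each section. -/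
theorem fst_image_iInter_of_antitone {α : Type*} [T2Space E] {R : ℕ → Set (α × E)}
    (hR : Antitone R) (hcomp : ∀ n a, IsCompact (Prod.mk a ⁻¹' R n)) :
    Prod.fst '' ⋂ n, R n = ⋂ n, Prod.fst '' R n := by
  refine (image_iInter_subset _ _).antisymm fun a ha => ?_
  have hne : ∀ n, (Prod.mk a ⁻¹' R n).Nonempty := fun n => by
    obtain ⟨p, hp, rfl⟩ := mem_iInter.1 ha n
    exact ⟨p.2, hp⟩
  obtain ⟨x, hx⟩ := IsCompact.nonempty_iInter_of_sequence_nonempty_isCompact_isClosed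
    (fun n => Prod.mk a ⁻¹' R n) (fun n => preimage_mono (hR n.le_succ)) hne (hcomp 0 a)
    fun n => (hcomp n a).isClosed
  exact ⟨(a, x), by simpa using hx, rfl⟩

variable [T2Space E]

theorem isCapacity_measure_fst_image (P : Measure Ω) [IsFiniteMeasure P] :
    IsCapacity (compactRectPaving (Ω := Ω) (E := E)) fun A => P (Prod.fst '' A) where
  mono _ _ h := measure_mono (image_mono h)
  iUnion_eq_iSup A hA := by
    rw [image_iUnion]
    exact Monotone.measure_iUnion fun _ _ h => image_mono (hA h)
  iInter_eq_iInf A hA hanti := by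
    rw [fst_image_iInter_of_antitone hanti fun n =>
      isCompact_preimage_mk_of_mem_compactRectPaving (hA n)]
    exact Antitone.measure_iInter (fun _ _ h => image_mono (hanti h))
      (fun n => (measurableSet_fst_image_of_mem_compactRectPaving (hA n)).nullMeasurableSet)
      ⟨0, measure_ne_top _ _⟩

theorem measurableSet_fst_image_of_mem_deltaPaving {S : Set (Ω × E)}
    (hS : S ∈ deltaPaving compactRectPaving) : MeasurableSet (Prod.fst '' S) := by
  obtain ⟨g, hg, hanti, rfl⟩ :=
    exists_antitone_of_mem_deltaPaving (fun _ h _ h' => inter_mem_compactRectPaving h h') hS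
  rw [fst_image_iInter_of_antitone hanti fun n =>
    isCompact_preimage_mk_of_mem_compactRectPaving (hg n)]
  exact MeasurableSet.iInter fun n => measurableSet_fst_image_of_mem_compactRectPaving (hg n)

end Projection

section Strip

variable {Ω E : Type*} [MeasurableSpace Ω] [TopologicalSpace E] {K₀ : Set E}

/-- Inside the strip the paving has the largest element `univ ×ˢ K₀`, which the Suslin
operation needs for countable unions and intersections. -/
def stripPaving (K₀ : Set E) : Set (Set (Ω × E)) :=
  {S | S ∈ compactRectPaving ∧ S ⊆ univ ×ˢ K₀}

theorem stripPaving_subset : stripPaving K₀ ⊆ (compactRectPaving : Set (Set (Ω × E))) :=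
  fun _ h => h.1

theorem union_mem_stripPaving {S T : Set (Ω × E)} (hS : S ∈ stripPaving K₀)
    (hT : T ∈ stripPaving K₀) : S ∪ T ∈ stripPaving K₀ :=
  ⟨union_mem_compactRectPaving hS.1 hT.1, union_subset hS.2 hT.2⟩

theorem inter_mem_stripPaving [T2Space E] {S T : Set (Ω × E)} (hS : S ∈ stripPaving K₀)
    (hT : T ∈ stripPaving K₀) : S ∩ T ∈ stripPaving K₀ :=
  ⟨inter_mem_compactRectPaving hS.1 hT.1, inter_subset_left.trans hS.2⟩

theorem univ_prod_mem_stripPaving (hK₀ : IsCompact K₀) :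
    (univ ×ˢ K₀ : Set (Ω × E)) ∈ stripPaving K₀ :=
  ⟨prod_mem_compactRectPaving .univ hK₀, subset_rfl⟩

theorem prod_inter_mem_stripPaving {B : Set Ω} {F : Set E} (hK₀ : IsCompact K₀)
    (hB : MeasurableSet B) (hF : IsClosed F) : B ×ˢ (F ∩ K₀) ∈ stripPaving K₀ :=
  ⟨prod_mem_compactRectPaving hB (hK₀.inter_left hF),
    prod_mono (subset_univ _) inter_subset_right⟩

theorem isSuslin_prod_inter_of_isOpen [TopologicalSpace.PseudoMetrizableSpace E]
    (hK₀ : IsCompact K₀) {B : Set Ω} {U : Set E} (hB : MeasurableSet B) (hU : IsOpen U) :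
    IsSuslin (stripPaving K₀) (B ×ˢ (U ∩ K₀)) := by
  let := TopologicalSpace.pseudoMetrizableSpacePseudoMetric E
  obtain ⟨F, hF, -, rfl, -⟩ := hU.exists_iUnion_isClosed
  rw [iUnion_inter, prod_iUnion]
  exact .iUnion (univ_prod_mem_stripPaving hK₀) (fun _ h => h.2) fun n =>
    .of_mem (prod_inter_mem_stripPaving hK₀ hB (hF n))

variable [T2Space E] [TopologicalSpace.PseudoMetrizableSpace E] [MeasurableSpace E]
  [BorelSpace E]

/-- The sets `A` with both `A` and `Aᶜ` Suslin inside the strip form a σ-algebra containing the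
rectangles with closed `E`-side. -/
theorem isSuslin_inter_univ_prod (hK₀ : IsCompact K₀) {A : Set (Ω × E)} (hA : MeasurableSet A) :
    IsSuslin (stripPaving K₀) (A ∩ univ ×ˢ K₀) := by
  have hT := univ_prod_mem_stripPaving (Ω := Ω) hK₀
  have hJT : ∀ S : Set (Ω × E), S ∈ stripPaving K₀ → S ⊆ univ ×ˢ K₀ := fun _ h => h.2
  have hA' : MeasurableSet[MeasurableSpace.generateFrom
      (image2 (· ×ˢ ·) {B : Set Ω | MeasurableSet B} {F : Set E | IsClosed F})] A := by
    rwa [generateFrom_eq_prod MeasurableSpace.generateFrom_measurableSet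
      (borel_eq_generateFrom_isClosed.symm.trans BorelSpace.measurable_eq.symm)
      isCountablySpanning_measurableSet ⟨fun _ => univ, fun _ => isClosed_univ, iUnion_const _⟩]
  refine (MeasurableSpace.generateFrom_induction _ (fun A _ =>
      IsSuslin (stripPaving K₀) (A ∩ univ ×ˢ K₀) ∧ IsSuslin (stripPaving K₀) (Aᶜ ∩ univ ×ˢ K₀))
    ?_ ?_ ?_ ?_ A hA').1
  · rintro _ ⟨B, hB, F, hF, rfl⟩ -
    have hcompl : (B ×ˢ F)ᶜ ∩ univ ×ˢ K₀ = Bᶜ ×ˢ (univ ∩ K₀) ∪ univ ×ˢ (Fᶜ ∩ K₀) := by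
      ext ⟨ω, x⟩
      simp only [mem_inter_iff, mem_compl_iff, mem_prod, mem_univ, mem_union]
      tauto
    rw [prod_inter_prod, inter_univ, hcompl]
    exact ⟨.of_mem (prod_inter_mem_stripPaving hK₀ hB hF), .union hT hJT
      (.of_mem (prod_inter_mem_stripPaving hK₀ hB.compl isClosed_univ))
      (isSuslin_prod_inter_of_isOpen hK₀ .univ hF.isOpen_compl)⟩
  · rw [empty_inter, compl_empty, univ_inter]
    exact ⟨.of_mem ⟨empty_mem_compactRectPaving, empty_subset _⟩, .of_mem hT⟩
  · rintro t - ⟨h, hc⟩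
    exact ⟨hc, by rwa [compl_compl]⟩
  · rintro s - h
    rw [compl_iUnion, iUnion_inter, iInter_inter]
    exact ⟨.iUnion hT hJT fun n => (h n).1,
      .iInter hT hJT (fun _ h _ h' => inter_mem_stripPaving h h') fun n => (h n).2⟩

theorem isCapacitable_of_measurableSet [SigmaCompactSpace E] (P : Measure Ω) [IsFiniteMeasure P]
    {A : Set (Ω × E)} (hA : MeasurableSet A) :
    IsCapacitable compactRectPaving (fun A => P (Prod.fst '' A)) A := by
  have hI := isCapacity_measure_fst_image (E := E) P
  have hfin : ∀ A : Set (Ω × E), P (Prod.fst '' A) ≠ ∞ := fun _ => measure_ne_top _ _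
  have hexh : A = ⋃ m, A ∩ univ ×ˢ compactCovering E m := by
    rw [← inter_iUnion, ← prod_iUnion, iUnion_compactCovering, univ_prod_univ, inter_univ]
  rw [hexh]
  refine hI.isCapacitable_iUnion hfin
    (fun m m' h => inter_subset_inter_right _ (prod_mono subset_rfl (compactCovering_subset E h)))
    fun m => ?_
  have hK := isCompact_compactCovering E m
  exact ((hI.of_paving_subset stripPaving_subset).isCapacitable_of_isSuslin hfin
    ⟨empty_mem_compactRectPaving, empty_subset _⟩ (fun _ h _ h' => union_mem_stripPaving h h')
    (isSuslin_inter_univ_prod hK hA)).mono_paving stripPaving_subset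

end Strip

/-- **The projection capacity.** For a probability space `(Ω, F, P)` and a locally compact
Polish space `E`, the set function `I_Ω(A) := P*(π_Ω(A))` (here `P` applied to an arbitrary
set is precisely the outer measure `P*`) is a capacity relative to the paving `Ip` of finite
unions of measurable rectangles with compact `E`-side, and every set `A` in the product
σ-field admits an increasing approximating sequence from `Iδ` as in Choquet's theorem. -/
theorem projection_capacity
    {Ω E : Type*} [MeasurableSpace Ω]
    [TopologicalSpace E] [PolishSpace E] [LocallyCompactSpace E]
    [MeasurableSpace E] [BorelSpace E]
    (P : Measure Ω) [IsProbabilityMeasure P]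
    (Ip : Set (Set (Ω × E)))
    (hIp : Ip = {S | ∃ (n : ℕ) (B : Fin n → Set Ω) (K : Fin n → Set E),
      (∀ i, MeasurableSet (B i)) ∧ (∀ i, IsCompact (K i)) ∧ S = ⋃ i, B i ×ˢ K i})
    (Iδ : Set (Set (Ω × E)))
    (hIδ : Iδ = {S | ∃ f : ℕ → Set (Ω × E), (∀ n, f n ∈ Ip) ∧ S = ⋂ n, f n}) :
    -- (1) `I_Ω` is an `(F ⊗_p K)`-capacity:
    ((∀ A B : Set (Ω × E), A ⊆ B → P (Prod.fst '' A) ≤ P (Prod.fst '' B)) ∧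
     (∀ A : ℕ → Set (Ω × E), Monotone A →
        P (Prod.fst '' ⋃ n, A n) = ⨆ n, P (Prod.fst '' A n)) ∧
     (∀ A : ℕ → Set (Ω × E), (∀ n, A n ∈ Ip) → Antitone A →
        P (Prod.fst '' ⋂ n, A n) = ⨅ n, P (Prod.fst '' A n))) ∧
    -- (2) inner approximation of product-measurable sets:
    (∀ A : Set (Ω × E), MeasurableSet A →
      ∃ L : ℕ → Set (Ω × E), Monotone L ∧ ∀ n : ℕ,
        L n ∈ Iδ ∧ L n ⊆ A ∧ MeasurableSet (Prod.fst '' L n) ∧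
        P (Prod.fst '' L n) ≤ P (Prod.fst '' A) ∧
        P (Prod.fst '' A) ≤ P (Prod.fst '' L n) + ((n : ℝ≥0∞) + 1)⁻¹) := by
  subst hIp hIδ
  have hI := isCapacity_measure_fst_image (E := E) P
  refine ⟨⟨fun _ _ h => hI.mono h, hI.iUnion_eq_iSup, hI.iInter_eq_iInf⟩, fun A hA => ?_⟩
  obtain ⟨L, hL, hLA⟩ := (isCapacitable_of_measurableSet P hA).exists_monotone hI.mono
    fun _ h _ h' => union_mem_compactRectPaving h h'
  exact ⟨L, hL, fun n => ⟨(hLA n).1, (hLA n).2.1,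
    measurableSet_fst_image_of_mem_deltaPaving (hLA n).1, hI.mono (hLA n).2.1, (hLA n).2.2⟩⟩
end

section
/- Let (Ω, F, P) be a complete probability space and E a locally compact Polish space. Let f : Ω × E → ℝ be measurable with respect to F ⊗ B(E) and A ∈ F ⊗ B(E). Then the function g : Ω → ℝ ∪ {−∞, +∞} defined by g(ω) := sup{ f(ω, x) : x ∈ E, (ω, x) ∈ A } (with the convention sup ∅ = −∞) is F-measurable. -/
/-!
For `c : EReal`, the set `{ω | c < g ω}` is the projection to `Ω` of the product-measurable set
`A ∩ {c < f}`, so everything rests on the measurable projection theorem for a complete finite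
measure. A product-measurable set involves only countably many measurable sets of `Ω`; coding
them by a measurable `π : Ω → (ℕ → Bool)` makes `A` the preimage of a Borel set `B` of the Polish
space `(ℕ → Bool) × E`, and the projection of `A` is `π⁻¹` of the analytic set `Prod.fst '' B`.

Analytic sets are null-measurable for every finite measure (Choquet capacitability): if
`S = f '' (ℕ → ℕ)` has measure `> c`, continuity from below lets one choose bounds `N 0, N 1, …`
one coordinate at a time so that the image of `{x | ∀ i < k, x i ≤ N i}` keeps measure `> c` for
every `k`; the closures of these images decrease to a subset of the compact set `f '' Iic N`,
which therefore has measure `≥ c`. Completeness of `P` upgrades null-measurability of the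
projection, pulled back along `π`, to measurability.
-/

open MeasureTheory Set Filter Topology MeasurableSpace ENNReal

def prefixBox (N : ℕ → ℕ) (k : ℕ) : Set (ℕ → ℕ) := {x | ∀ i < k, x i ≤ N i}

lemma isClosed_prefixBox (N : ℕ → ℕ) (k : ℕ) : IsClosed (prefixBox N k) := by
  simp only [prefixBox, ofPred_forall]
  exact isClosed_iInter fun i => isClosed_iInter fun _ =>
    isClosed_le (continuous_apply i) continuous_const

lemma antitone_prefixBox (N : ℕ → ℕ) : Antitone (prefixBox N) :=
  fun _ _ hkl _ hx i hi => hx i (hi.trans_le hkl)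

lemma prefixBox_zero (N : ℕ → ℕ) : prefixBox N 0 = univ := by
  simp [prefixBox]

lemma prefixBox_succ (N : ℕ → ℕ) (k : ℕ) :
    prefixBox N (k + 1) = prefixBox N k ∩ {x | x k ≤ N k} := by
  ext x
  simp only [prefixBox, mem_ofPred_eq, mem_inter_iff, Nat.lt_succ_iff_lt_or_eq, or_imp, forall_and,
    forall_eq]

lemma isCompact_Iic_of_orderBot {α : Type*} [Preorder α] [OrderBot α] [TopologicalSpace α]
    [CompactIccSpace α] (a : α) : IsCompact (Iic a) := by
  simpa using isCompact_Icc (a := ⊥) (b := a)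

lemma exists_le_mapClusterPt_of_forall_mem_prefixBox {N : ℕ → ℕ} {x : ℕ → ℕ → ℕ}
    (hx : ∀ k, x k ∈ prefixBox N k) : ∃ z ≤ N, MapClusterPt z atTop x := by
  -- coordinate `i` is bounded by `N i` from `k = i + 1` on, and by finitely many values before
  let M : ℕ → ℕ := fun i => N i ⊔ (Finset.range (i + 1)).sup fun k => x k i
  have hxM : ∀ k, x k ∈ Iic M := fun k i => by
    rcases lt_or_ge i k with hik | hki
    · exact (hx k i hik).trans le_sup_left
    · exact (Finset.le_sup (f := fun k => x k i) (by simpa [Nat.lt_succ_iff] using hki)).trans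
        le_sup_right
  obtain ⟨z, -, hz⟩ := (isCompact_Iic_of_orderBot M).exists_mapClusterPt (f := atTop)
    (tendsto_principal.2 (.of_forall hxM))
  refine ⟨z, fun i => ?_, hz⟩
  have hev : ∀ᶠ k in atTop, x k ∈ prefixBox N (i + 1) :=
    (eventually_ge_atTop (i + 1)).mono fun k hk => antitone_prefixBox N hk (hx k)
  exact (isClosed_prefixBox N (i + 1)).mem_of_mapClusterPt hz hev i i.lt_succ_self

lemma iInter_closure_image_prefixBox_subset {X : Type*} [TopologicalSpace X] [T2Space X]
    [FirstCountableTopology X] {f : (ℕ → ℕ) → X} (hf : Continuous f) (N : ℕ → ℕ) :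
    ⋂ k, closure (f '' prefixBox N k) ⊆ f '' Iic N := by
  intro y hy
  obtain ⟨U, hU⟩ := (𝓝 y).exists_antitone_basis
  have hmeet : ∀ k, ∃ x ∈ prefixBox N k, f x ∈ U k := fun k => by
    obtain ⟨_, hyU, x, hx, rfl⟩ := mem_closure_iff_nhds.1 (mem_iInter.1 hy k) (U k) (hU.mem k)
    exact ⟨x, hx, hyU⟩
  choose x hxN hxU using hmeet
  obtain ⟨z, hzN, hz⟩ := exists_le_mapClusterPt_of_forall_mem_prefixBox hxN
  obtain ⟨φ, hφ, hxz⟩ := hz.tendsto_subseq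
  exact ⟨z, hzN, tendsto_nhds_unique ((hf.tendsto z).comp hxz)
    ((hU.tendsto hxU).comp hφ.tendsto_atTop)⟩

lemma exists_lt_measure_image_inter_setOf_le {Y X : Type*} [MeasurableSpace X]
    (μ : Measure X) (f : Y → X) (φ : Y → ℕ) {T : Set Y} {c : ℝ≥0∞} (hc : c < μ (f '' T)) :
    ∃ n, c < μ (f '' (T ∩ {y | φ y ≤ n})) := by
  have hmono : Monotone fun n => f '' (T ∩ {y | φ y ≤ n}) :=
    fun _ _ hmn => image_mono (inter_subset_inter_right _ fun _ hy => le_trans hy hmn)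
  have hunion : ⋃ n, f '' (T ∩ {y | φ y ≤ n}) = f '' T := by
    rw [← image_iUnion, ← inter_iUnion, iUnion_eq_univ_iff.2 fun y => ⟨φ y, Nat.le_refl _⟩,
      inter_univ]
  rw [← hunion, hmono.measure_iUnion] at hc
  exact lt_iSup_iff.1 hc

lemma exists_forall_lt_measure_image_prefixBox {X : Type*} [MeasurableSpace X]
    (μ : Measure X) (f : (ℕ → ℕ) → X) {c : ℝ≥0∞} (hc : c < μ (range f)) :
    ∃ N : ℕ → ℕ, ∀ k, c < μ (f '' prefixBox N k) := by
  have step : ∀ (T : Set (ℕ → ℕ)) (k : ℕ),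
      ∃ n, c < μ (f '' T) → c < μ (f '' (T ∩ {x | x k ≤ n})) := fun T k => by
    by_cases h : c < μ (f '' T)
    · exact (exists_lt_measure_image_inter_setOf_le μ f (· k) h).imp fun _ hn _ => hn
    · exact ⟨0, fun h' => absurd h' h⟩
  choose n hn using step
  let T : ℕ → Set (ℕ → ℕ) := fun k => Nat.rec univ (fun k Tk => Tk ∩ {x | x k ≤ n Tk k}) k
  let N : ℕ → ℕ := fun k => n (T k) k
  have hT : ∀ k, T k = prefixBox N k := by
    intro k
    induction k with
    | zero => exact (prefixBox_zero N).symm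
    | succ k ih => rw [prefixBox_succ, ← ih]
  refine ⟨N, fun k => ?_⟩
  rw [← hT]
  induction k with
  | zero => simpa [T] using hc
  | succ k ih => exact hn _ _ ih

lemma nullMeasurableSet_of_forall_lt_exists_subset_le_measure {α : Type*} [MeasurableSpace α]
    {μ : Measure α} [IsFiniteMeasure μ] {S : Set α}
    (h : ∀ c < μ S, ∃ B ⊆ S, MeasurableSet B ∧ c ≤ μ B) : NullMeasurableSet S μ := by
  rcases eq_or_ne (μ S) 0 with h0 | h0
  · exact .of_null h0
  obtain ⟨u, -, hu, hlim⟩ := exists_seq_strictMono_tendsto' (pos_iff_ne_zero.2 h0)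
  choose B hBS hB hle using fun n => h (u n) (hu n).2
  have hSB : μ S ≤ μ (⋃ n, B n) :=
    le_of_tendsto' hlim fun n => (hle n).trans (measure_mono (subset_iUnion B n))
  exact (MeasurableSet.iUnion hB).nullMeasurableSet.congr
    (ae_eq_of_subset_of_measure_ge (iUnion_subset hBS) hSB
      (MeasurableSet.iUnion hB).nullMeasurableSet (measure_ne_top μ S))

namespace MeasureTheory

variable {X : Type*} [TopologicalSpace X] [T2Space X] [FirstCountableTopology X]
  [MeasurableSpace X] [OpensMeasurableSpace X] {μ : Measure X} [IsFiniteMeasure μ] {S : Set X}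

theorem AnalyticSet.exists_isCompact_subset_le_measure (hS : AnalyticSet S) {c : ℝ≥0∞}
    (hc : c < μ S) : ∃ K ⊆ S, IsCompact K ∧ c ≤ μ K := by
  rw [AnalyticSet] at hS
  obtain rfl | ⟨f, hf, rfl⟩ := hS
  · simp at hc
  obtain ⟨N, hN⟩ := exists_forall_lt_measure_image_prefixBox μ f hc
  refine ⟨f '' Iic N, image_subset_range f _, (isCompact_Iic_of_orderBot N).image hf, ?_⟩
  have hanti : Antitone fun k => closure (f '' prefixBox N k) :=
    fun _ _ hkl => closure_mono (image_mono (antitone_prefixBox N hkl))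
  calc c ≤ ⨅ k, μ (closure (f '' prefixBox N k)) :=
        le_iInf fun k => (hN k).le.trans (measure_mono subset_closure)
    _ = μ (⋂ k, closure (f '' prefixBox N k)) :=
        (hanti.measure_iInter (fun _ => isClosed_closure.measurableSet.nullMeasurableSet)
          ⟨0, measure_ne_top μ _⟩).symm
    _ ≤ μ (f '' Iic N) := measure_mono (iInter_closure_image_prefixBox_subset hf N)

theorem AnalyticSet.nullMeasurableSet (hS : AnalyticSet S) : NullMeasurableSet S μ :=
  nullMeasurableSet_of_forall_lt_exists_subset_le_measure fun _ hc =>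
    let ⟨K, hKS, hK, hcK⟩ := hS.exists_isCompact_subset_le_measure hc
    ⟨K, hKS, hK.measurableSet, hcK⟩

end MeasureTheory

theorem MeasurableSet.exists_seq_measurableSet_prod_generateFrom {Ω E : Type*}
    [MeasurableSpace Ω] [mE : MeasurableSpace E] {A : Set (Ω × E)} (hA : MeasurableSet A) :
    ∃ s : ℕ → Set Ω, (∀ n, MeasurableSet (s n)) ∧
      MeasurableSet[(generateFrom (range s)).prod mE] A := by
  have mono : ∀ {s t : ℕ → Set Ω}, range s ⊆ range t →
      (generateFrom (range s)).prod mE ≤ (generateFrom (range t)).prod mE :=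
    fun h => sup_le_sup_right (comap_mono (generateFrom_mono h)) _
  rw [← generateFrom_prod] at hA
  induction A, hA using generateFrom_induction with
  | hC t ht =>
    obtain ⟨u, hu, v, hv, rfl⟩ := ht
    exact ⟨fun _ => u, fun _ => hu, @MeasurableSet.prod _ _ (generateFrom (range fun _ => u)) mE
      _ _ (measurableSet_generateFrom ⟨0, rfl⟩) hv⟩
  | empty =>
    exact ⟨fun _ => ∅, fun _ => .empty, @MeasurableSet.empty _ ((generateFrom _).prod mE)⟩
  | compl t _ ih =>
    obtain ⟨s, hs, ht⟩ := ih
    exact ⟨s, hs, ht.compl⟩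
  | iUnion t _ ih =>
    choose s hs ht using ih
    refine ⟨fun k => s k.unpair.1 k.unpair.2, fun k => hs _ _, .iUnion fun n => mono ?_ _ (ht n)⟩
    rintro _ ⟨m, rfl⟩
    exact ⟨Nat.pair n m, by simp⟩

theorem MeasurableSet.exists_measurable_prodMap_preimage_eq {Ω E : Type*}
    [MeasurableSpace Ω] [mE : MeasurableSpace E] {A : Set (Ω × E)} (hA : MeasurableSet A) :
    ∃ π : Ω → ℕ → Bool, Measurable π ∧
      ∃ B : Set ((ℕ → Bool) × E), MeasurableSet B ∧ Prod.map π id ⁻¹' B = A := by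
  classical
  obtain ⟨s, hs, hA⟩ := hA.exists_seq_measurableSet_prod_generateFrom
  let π : Ω → ℕ → Bool := fun ω n => decide (ω ∈ s n)
  have hπ : Measurable π :=
    measurable_pi_lambda _ fun n => measurable_to_bool (by simpa [π, preimage] using hs n)
  have hgen : generateFrom (range s) ≤ MeasurableSpace.comap π inferInstance := by
    refine generateFrom_le ?_
    rintro _ ⟨n, rfl⟩
    exact ⟨{y | y n = true}, measurableSet_eq_fun (measurable_pi_apply n) measurable_const,
      by ext; simp [π]⟩
  have hle : (generateFrom (range s)).prod mE ≤
      MeasurableSpace.comap (Prod.map π id) inferInstance := by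
    rw [Prod.instMeasurableSpace, comap_prodMap, MeasurableSpace.comap_id]
    exact sup_le_sup_right (comap_mono hgen) _
  exact ⟨π, hπ, hle A hA⟩

lemma image_fst_preimage_prodMap_id {α β γ : Type*} (f : α → β) (B : Set (β × γ)) :
    Prod.fst '' (Prod.map f id ⁻¹' B) = f ⁻¹' (Prod.fst '' B) := by
  ext
  simp

theorem MeasurableSet.image_fst_of_isComplete {Ω E : Type*} [MeasurableSpace Ω]
    [TopologicalSpace E] [PolishSpace E] [MeasurableSpace E] [BorelSpace E]
    (P : Measure Ω) [IsFiniteMeasure P] [P.IsComplete] {A : Set (Ω × E)}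
    (hA : MeasurableSet A) : MeasurableSet (Prod.fst '' A) := by
  obtain ⟨π, hπ, B, hB, rfl⟩ := hA.exists_measurable_prodMap_preimage_eq
  -- instance search does not find `PolishSpace (ℕ → Bool)` without this intermediate step
  have : TopologicalSpace.IsCompletelyMetrizableSpace (ℕ → Bool) := inferInstance
  have hana : AnalyticSet (Prod.fst '' B) := hB.analyticSet.image_of_continuous continuous_fst
  rw [image_fst_preimage_prodMap_id]
  exact ((hana.nullMeasurableSet (μ := P.map π)).preimage
    (hπ.quasiMeasurePreserving P)).measurable_of_complete

theorem measurable_partial_sup_general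
    {Ω E : Type*} [MeasurableSpace Ω]
    [TopologicalSpace E] [PolishSpace E]
    [MeasurableSpace E] [BorelSpace E]
    (P : Measure Ω) [IsProbabilityMeasure P] (hP : P.IsComplete)
    (f : Ω × E → ℝ) (hf : Measurable f)
    (A : Set (Ω × E)) (hA : MeasurableSet A)
    (g : Ω → EReal)
    (hg : ∀ ω, g ω = ⨆ (x : E) (_ : (ω, x) ∈ A), (f (ω, x) : EReal)) :
    Measurable g := by
  have hfE : Measurable fun p : Ω × E => (f p : EReal) := measurable_coe_real_ereal.comp hf
  have hsuperlevel (c : EReal) :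
      g ⁻¹' Ioi c = Prod.fst '' (A ∩ (fun p => (f p : EReal)) ⁻¹' Ioi c) := by
    ext ω
    simp [hg ω, lt_iSup_iff]
  refine measurable_of_Ioi fun c => ?_
  rw [hsuperlevel c]
  exact (hA.inter (hfE measurableSet_Ioi)).image_fst_of_isComplete P

/-- **Measurability of the partial supremum.** Let `(Ω, F, P)` be a complete probability
space, `E` a locally compact Polish space, `f` a product-measurable real function and
`A` a product-measurable set.  Then `g(ω) := sup { f(ω,x) : (ω,x) ∈ A }` (with the
convention `sup ∅ = −∞`, whence the `EReal` values) is `F`-measurable. -/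
theorem measurable_partial_sup
    {Ω E : Type*} [MeasurableSpace Ω]
    [TopologicalSpace E] [PolishSpace E] [LocallyCompactSpace E]
    [MeasurableSpace E] [BorelSpace E]
    (P : Measure Ω) [IsProbabilityMeasure P] (hP : P.IsComplete)
    (f : Ω × E → ℝ) (hf : Measurable f)
    (A : Set (Ω × E)) (hA : MeasurableSet A)
    (g : Ω → EReal)
    (hg : ∀ ω, g ω = ⨆ (x : E) (_ : (ω, x) ∈ A), (f (ω, x) : EReal)) :
    Measurable g :=
  measurable_partial_sup_general P hP f hf A hA g hg
end

section
/- (Jankov–von Neumann selection theorem.) Let E and F be Borel spaces and A an analytic subset of E × F. Then there exists an analytically measurable function φ : π_E(A) → F such that (x, φ(x)) ∈ A for every x ∈ π_E(A). -/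
/-!
Write a nonempty analytic set `A ⊆ E × F` as the range of a continuous `g : ℕ^ℕ → E × F` and put
`f := Prod.fst ∘ g`. For `x ∈ π_E(A)` the fibre `f⁻¹{x}` is a nonempty closed subset of Baire space;
select its lexicographically least point, built digit by digit: the `n`-th digit is the least `k`
such that `x` lies in the image under `f` of the cylinder extending the digits chosen so far by `k`.
These images are analytic, so each digit is an `A(E)`-measurable function of `x`, and
`x ↦ (g (selected point)).2` is the required selector.
-/

open MeasureTheory

/-- A subset `B` of a measurable space `E` is analytic if it is the projection onto `E` of
a Borel (measurable) subset of `E × G` for some Borel space `G` (modelled as a standard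
Borel space). -/
def IsAnalyticSet {E : Type*} [mE : MeasurableSpace E] (B : Set E) : Prop :=
  ∃ (G : Type) (mG : MeasurableSpace G), @StandardBorelSpace G mG ∧
    ∃ C : Set (E × G), MeasurableSet[mE.prod mG] C ∧ B = Prod.fst '' C

/-- The σ-field `A(E)` generated by all analytic subsets of `E`. -/
def analyticSigma (E : Type*) [MeasurableSpace E] : MeasurableSpace E :=
  MeasurableSpace.generateFrom {s : Set E | IsAnalyticSet s}

open Set PiNat

theorem isOpen_setOf_res_eq {α : Type*} [TopologicalSpace α] [DiscreteTopology α]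
    (n : ℕ) (s : List α) : IsOpen {y : ℕ → α | res y n = s} := by
  by_cases h : ∃ x, res x n = s
  · obtain ⟨x, rfl⟩ := h
    rw [← cylinder_eq_res]
    exact isOpen_cylinder _ x n
  · convert isOpen_empty
    exact eq_empty_of_forall_notMem fun y hy => h ⟨y, hy⟩

theorem IsAnalyticSet.analyticSet {E : Type*} [MeasurableSpace E] [StandardBorelSpace E]
    [TopologicalSpace E] [OpensMeasurableSpace E] [SecondCountableTopology E] {s : Set E}
    (hs : IsAnalyticSet s) : AnalyticSet s := by
  obtain ⟨G, mG, hG, C, hC, rfl⟩ := hs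
  exact hC.analyticSet_image measurable_fst

theorem MeasureTheory.AnalyticSet.isAnalyticSet {E : Type*} [TopologicalSpace E] [T2Space E]
    [MeasurableSpace E] [OpensMeasurableSpace E] {s : Set E} (hs : AnalyticSet s) :
    IsAnalyticSet s := by
  refine ⟨ℕ → ℕ, inferInstance, inferInstance, ?_⟩
  rw [AnalyticSet] at hs
  rcases hs with rfl | ⟨g, hg, rfl⟩
  · exact ⟨∅, MeasurableSet.empty, (image_empty _).symm⟩
  · refine ⟨{p | g p.2 = p.1}, (isClosed_eq (hg.comp continuous_snd) continuous_fst).measurableSet,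
      ?_⟩
    ext x
    simp

section LeftmostBranch

variable {E : Type*} (f : (ℕ → ℕ) → E)

open Classical in
/-- The first `n` digits (in reverse order, as in `PiNat.res`) of the lexicographically least
point of `f⁻¹{x}`. -/
noncomputable def leftmostPrefix (x : E) : ℕ → List ℕ
  | 0 => []
  | n + 1 =>
    (if h : ∃ k, x ∈ f '' {y | res y (n + 1) = k :: leftmostPrefix x n} then Nat.find h else 0) ::
      leftmostPrefix x n

noncomputable def leftmostBranch (x : E) (n : ℕ) : ℕ :=
  (leftmostPrefix f x (n + 1)).headD 0

variable {f}

theorem res_leftmostBranch (x : E) (n : ℕ) :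
    res (leftmostBranch f x) n = leftmostPrefix f x n := by
  induction n with
  | zero => rfl
  | succ n ih => exact congrArg (leftmostBranch f x n :: ·) ih

theorem mem_image_leftmostPrefix {x : E} (hx : x ∈ range f) (n : ℕ) :
    x ∈ f '' {y | res y n = leftmostPrefix f x n} := by
  classical
  induction n with
  | zero =>
    obtain ⟨y, rfl⟩ := hx
    exact ⟨y, rfl, rfl⟩
  | succ n ih =>
    have hext : ∃ k, x ∈ f '' {y | res y (n + 1) = k :: leftmostPrefix f x n} := by
      obtain ⟨y, hy, rfl⟩ := ih
      exact ⟨y n, y, congrArg (y n :: ·) hy, rfl⟩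
    simp only [leftmostPrefix, dif_pos hext]
    exact Nat.find_spec hext

theorem leftmostPrefix_succ_eq_cons_iff {x : E} (hx : x ∈ range f) {n k : ℕ} {s : List ℕ} :
    leftmostPrefix f x (n + 1) = k :: s ↔
      leftmostPrefix f x n = s ∧ x ∈ f '' {y | res y (n + 1) = k :: s} ∧
        ∀ j < k, x ∉ f '' {y | res y (n + 1) = j :: s} := by
  classical
  have hext : ∃ k, x ∈ f '' {y | res y (n + 1) = k :: leftmostPrefix f x n} :=
    ⟨_, mem_image_leftmostPrefix hx (n + 1)⟩
  simp only [leftmostPrefix, dif_pos hext, List.cons.injEq]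
  constructor
  · rintro ⟨hk, rfl⟩
    exact ⟨rfl, (Nat.find_eq_iff hext).1 hk⟩
  · rintro ⟨rfl, hk⟩
    exact ⟨(Nat.find_eq_iff hext).2 hk, rfl⟩

theorem apply_leftmostBranch [TopologicalSpace E] [T2Space E] (hf : Continuous f) {x : E}
    (hx : x ∈ range f) : f (leftmostBranch f x) = x := by
  have hcl : leftmostBranch f x ∈ closure (f ⁻¹' {x}) := by
    refine (isTopologicalBasis_cylinders _).mem_closure_iff.2 ?_
    rintro _ ⟨y, n, rfl⟩ hy
    obtain ⟨z, hz, hzx⟩ := mem_image_leftmostPrefix hx n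
    refine ⟨z, ?_, hzx⟩
    rw [← mem_cylinder_iff_eq.1 hy, cylinder_eq_res, res_leftmostBranch]
    exact hz
  rwa [(isClosed_singleton.preimage hf).closure_eq] at hcl

variable {m : MeasurableSpace E} (hD : ∀ n s, MeasurableSet (f '' {y | res y n = s}))
include hD

theorem measurableSet_leftmostPrefix_eq (n : ℕ) (s : List ℕ) :
    MeasurableSet {x : range f | leftmostPrefix f x n = s} := by
  induction n generalizing s with
  | zero => exact MeasurableSet.const ([] = s)
  | succ n ih =>
    rcases s with _ | ⟨k, s⟩
    · simp [leftmostPrefix]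
    · have hset : {x : range f | leftmostPrefix f x (n + 1) = k :: s} =
          {x : range f | leftmostPrefix f x n = s} ∩
            Subtype.val ⁻¹' (f '' {y | res y (n + 1) = k :: s}) ∩
              ⋂ j : Fin k, Subtype.val ⁻¹' (f '' {y | res y (n + 1) = (j : ℕ) :: s})ᶜ := by
        ext x
        simp [leftmostPrefix_succ_eq_cons_iff x.2, and_assoc, Fin.forall_iff]
      rw [hset]
      exact ((ih s).inter (measurable_subtype_coe (hD _ _))).inter
        (.iInter fun j => measurable_subtype_coe (hD _ _).compl)

theorem measurable_leftmostBranch : Measurable fun x : range f => leftmostBranch f x := by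
  let : MeasurableSpace (List ℕ) := ⊤
  refine measurable_pi_lambda _ fun n => ?_
  have : Measurable fun x : range f => leftmostPrefix f x (n + 1) :=
    measurable_to_countable' fun s => measurableSet_leftmostPrefix_eq hD (n + 1) s
  exact (measurable_from_top (f := fun l : List ℕ => l.headD 0)).comp this

end LeftmostBranch

/-- **Jankov–von Neumann selection theorem.** If `A` is an analytic subset of `E × F`
(`E`, `F` Borel spaces), there is an analytically measurable `φ : π_E(A) → F` (measurable
for the trace on `π_E(A)` of the σ-field generated by the analytic subsets of `E`) whose
graph is contained in `A`. -/
theorem jankov_von_neumann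
    {E F : Type*} [MeasurableSpace E] [StandardBorelSpace E]
    [MeasurableSpace F] [StandardBorelSpace F]
    (A : Set (E × F)) (hA : IsAnalyticSet A) :
    ∃ φ : (Prod.fst '' A) → F,
      @Measurable _ _ ((analyticSigma E).comap Subtype.val) _ φ ∧
      ∀ x : (Prod.fst '' A), ((x : E), φ x) ∈ A := by
  let := upgradeStandardBorel E
  let := upgradeStandardBorel F
  have hA' := hA.analyticSet
  rw [AnalyticSet] at hA'
  rcases hA' with rfl | ⟨g, hg, rfl⟩
  · rw [image_empty]
    exact ⟨isEmptyElim, fun _ _ => Subsingleton.measurableSet, isEmptyElim⟩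
  rw [← range_comp]
  have hf : Continuous (Prod.fst ∘ g) := continuous_fst.comp hg
  have hD (n : ℕ) (s : List ℕ) :
      MeasurableSet[analyticSigma E] (Prod.fst ∘ g '' {y | res y n = s}) :=
    MeasurableSpace.measurableSet_generateFrom
      ((isOpen_setOf_res_eq n s).analyticSet_image hf).isAnalyticSet
  refine ⟨fun x => (g (leftmostBranch (Prod.fst ∘ g) x)).2,
    (measurable_snd.comp hg.measurable).comp (measurable_leftmostBranch hD), fun x => ?_⟩
  convert mem_range_self (f := g) (leftmostBranch (Prod.fst ∘ g) x)
  exact (apply_leftmostBranch hf x.2).symm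
end
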